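/- Let n ≥ 1 and let x₁,…,x_n ∈ ℝ² be nonzero vectors such that no two of them are parallel (x_i, x_j linearly independent for i ≠ j). Then the set of strict sign patterns {(𝟙(⟨x₁,u⟩ > 0), …, 𝟙(⟨x_n,u⟩ > 0)) : u ∈ ℝ², ⟨x_i,u⟩ ≠ 0 for all i} has cardinality exactly 2n. -/

import Mathlib

open Matrix

/-- The set of parity sign patterns of `⌊t - b i⌋` over admissible `t`. -/
def signPatternSet {n : ℕ} (b : Fin n → ℝ) : Set (Fin n → Bool) :=
  {p | ∃ t : ℝ, (∀ i, ∀ k : ℤ, t - b i ≠ (k : ℝ)) ∧ p = fun i => decide (Even ⌊t - b i⌋)}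

lemma signPatternSet_comp_equiv {n : ℕ} (b : Fin n → ℝ) (σ : Equiv.Perm (Fin n)) :
    signPatternSet (b ∘ σ) = (fun p => p ∘ σ) '' signPatternSet b := by
  ext p
  constructor
  · rintro ⟨t, hnd, rfl⟩
    refine ⟨fun j => decide (Even ⌊t - b j⌋), ⟨t, fun j k => by simpa using hnd (σ.symm j) k, rfl⟩, rfl⟩
  · rintro ⟨q, ⟨t, hnd, rfl⟩, rfl⟩
    exact ⟨t, fun i k => hnd (σ i) k, rfl⟩

lemma decide_even_add (m e : ℤ) :
    decide (Even (m + e)) = xor (decide (Even m)) (decide (Odd e)) := by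
  by_cases he : Even e <;> by_cases hm : Even m <;>
    simp [Int.even_add, he, hm, ← Int.not_even_iff_odd]

lemma signPatternSet_fract {n : ℕ} (b : Fin n → ℝ) :
    signPatternSet (fun i => Int.fract (b i)) =
      (fun p => fun i => xor (p i) (decide (Odd ⌊b i⌋))) '' signPatternSet b := by
  have hkey : ∀ (t : ℝ) (i : Fin n), t - Int.fract (b i) = (t - b i) + (⌊b i⌋ : ℝ) := by
    intro t i; rw [Int.fract]; ring
  ext p
  constructor
  · rintro ⟨t, hnd, rfl⟩
    refine ⟨fun i => decide (Even ⌊t - b i⌋), ⟨t, ?_, rfl⟩, ?_⟩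
    · intro i k hk
      refine hnd i (k + ⌊b i⌋) ?_
      rw [hkey, hk]; push_cast; ring
    · funext i
      rw [hkey, Int.floor_add_intCast, decide_even_add]
  · rintro ⟨q, ⟨t, hnd, rfl⟩, rfl⟩
    refine ⟨t, ?_, ?_⟩
    · intro i k hk
      refine hnd i (k - ⌊b i⌋) ?_
      have := hkey t i
      push_cast
      linarith [hk, this]
    · funext i
      rw [hkey, Int.floor_add_intCast, decide_even_add]

lemma core_sorted {n : ℕ} (hn : 0 < n) (b : Fin n → ℝ) (hmono : StrictMono b)
    (hlt : ∀ i, b i < b ⟨0, hn⟩ + 1) :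
    signPatternSet b =
      ↑((Finset.univ.image fun k : Fin n => fun i : Fin n => decide (i ≤ k)) ∪
        (Finset.univ.image fun k : Fin n => fun i : Fin n => decide (k < i))) := by
  have h0le : ∀ i : Fin n, (⟨0, hn⟩ : Fin n) ≤ i := fun i => by simp [Fin.le_def]
  ext p
  simp only [Finset.coe_union, Set.mem_union, Finset.coe_image, Finset.coe_univ,
    Set.image_univ, Set.mem_range, signPatternSet, Set.mem_setOf_eq]
  constructor
  · rintro ⟨t, hnd, rfl⟩
    set N0 : ℤ := ⌊t - b ⟨0, hn⟩⌋ with hN0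
    have hNle : ∀ i, ⌊t - b i⌋ ≤ N0 := fun i =>
      Int.floor_le_floor (by linarith [hmono.monotone (h0le i)])
    have hNge : ∀ i, N0 - 1 ≤ ⌊t - b i⌋ := by
      intro i
      refine Int.le_floor.mpr ?_
      push_cast
      have h1 : (N0 : ℝ) ≤ t - b ⟨0, hn⟩ := Int.floor_le _
      linarith [hlt i]
    set K : Finset (Fin n) := Finset.univ.filter fun i => ⌊t - b i⌋ = N0 with hK
    have hKne : K.Nonempty := ⟨⟨0, hn⟩, by simp [hK, hN0]⟩
    set k₀ := K.max' hKne with hk₀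
    have hk₀N : ⌊t - b k₀⌋ = N0 := by
      have := K.max'_mem hKne
      simp [hK] at this
      exact this
    have hle : ∀ i, i ≤ k₀ → ⌊t - b i⌋ = N0 := by
      intro i hi
      refine le_antisymm (hNle i) ?_
      rw [← hk₀N]
      exact Int.floor_le_floor (by linarith [hmono.monotone hi])
    have hgt : ∀ i, k₀ < i → ⌊t - b i⌋ = N0 - 1 := by
      intro i hi
      rcases (hNle i).lt_or_eq with h | h
      · have := hNge i; omega
      · exact absurd (K.le_max' i (by simp [hK, h])) (not_le.mpr hi)
    by_cases hpar : Even N0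
    · left
      refine ⟨k₀, funext fun i => ?_⟩
      rcases le_or_gt i k₀ with h | h
      · rw [hle i h]; simp [h, hpar]
      · rw [hgt i h]; simp [h.not_ge, Int.even_sub_one, hpar]
    · right
      refine ⟨k₀, funext fun i => ?_⟩
      rcases le_or_gt i k₀ with h | h
      · rw [hle i h]; simp [h.not_gt, hpar]
      · rw [hgt i h]; simp [h, Int.even_sub_one, hpar, ← Int.not_even_iff_odd]
  · intro hp
    -- set up the witness point for a given k
    have main : ∀ k : Fin n,
        ∃ t : ℝ, (∀ i : Fin n, (i ≤ k → 0 < t - b i ∧ t - b i < 1) ∧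
          (k < i → -1 < t - b i ∧ t - b i < 0)) := by
      intro k
      set g : ℝ := if h : (k : ℕ) + 1 < n then b ⟨(k : ℕ) + 1, h⟩ else b ⟨0, hn⟩ + 1 with hg
      have hbg : b k < g := by
        rw [hg]; split_ifs with h
        · exact hmono (by simp [Fin.lt_def])
        · exact hlt k
      have hg1 : g ≤ b ⟨0, hn⟩ + 1 := by
        rw [hg]; split_ifs with h
        · exact (hlt _).le
        · exact le_refl _
      refine ⟨(b k + g) / 2, fun i => ⟨fun hi => ?_, fun hi => ?_⟩⟩
      · have h1 : b i ≤ b k := hmono.monotone hi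
        have h2 : b ⟨0, hn⟩ ≤ b i := hmono.monotone (h0le i)
        constructor <;> nlinarith
      · have hk1 : (k : ℕ) + 1 < n := lt_of_le_of_lt (Nat.succ_le_of_lt hi) i.isLt
        have hgb : g ≤ b i := by
          rw [hg, dif_pos hk1]
          exact hmono.monotone (by simpa [Fin.le_def] using Nat.succ_le_of_lt hi)
        have h2 : b ⟨0, hn⟩ ≤ b k := hmono.monotone (h0le k)
        have h3 : b i < b ⟨0, hn⟩ + 1 := hlt i
        constructor <;> nlinarith
    rcases hp with ⟨k, hk⟩ | ⟨k, hk⟩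
    · rcases main k with ⟨t, ht⟩
      refine ⟨t, ?_, ?_⟩
      · intro i m hm
        rcases le_or_gt i k with h | h
        · obtain ⟨h1, h2⟩ := (ht i).1 h
          rw [hm] at h1 h2
          have : (0 : ℤ) < m ∧ m < 1 := by exact_mod_cast And.intro h1 h2
          omega
        · obtain ⟨h1, h2⟩ := (ht i).2 h
          rw [hm] at h1 h2
          have : (-1 : ℤ) < m ∧ m < 0 := by exact_mod_cast And.intro h1 h2
          omega
      · rw [← hk]
        funext i
        rcases le_or_gt i k with h | h
        · obtain ⟨h1, h2⟩ := (ht i).1 h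
          rw [Int.floor_eq_zero_iff.mpr ⟨h1.le, h2⟩]
          simp [h]
        · obtain ⟨h1, h2⟩ := (ht i).2 h
          have : ⌊t - b i⌋ = -1 := Int.floor_eq_iff.mpr ⟨by push_cast; linarith, by push_cast; linarith⟩
          rw [this]
          simp [h.not_ge]
    · rcases main k with ⟨t, ht⟩
      refine ⟨t + 1, ?_, ?_⟩
      · intro i m hm
        have hm' : t - b i = ((m - 1 : ℤ) : ℝ) := by push_cast; linarith
        rcases le_or_gt i k with h | h
        · obtain ⟨h1, h2⟩ := (ht i).1 h
          rw [hm'] at h1 h2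
          have : (0 : ℤ) < m - 1 ∧ m - 1 < 1 := by exact_mod_cast And.intro h1 h2
          omega
        · obtain ⟨h1, h2⟩ := (ht i).2 h
          rw [hm'] at h1 h2
          have : (-1 : ℤ) < m - 1 ∧ m - 1 < 0 := by exact_mod_cast And.intro h1 h2
          omega
      · rw [← hk]
        funext i
        have harg : t + 1 - b i = (t - b i) + 1 := by ring
        rw [harg, Int.floor_add_one]
        rcases le_or_gt i k with h | h
        · obtain ⟨h1, h2⟩ := (ht i).1 h
          rw [Int.floor_eq_zero_iff.mpr ⟨h1.le, h2⟩]
          simp [h.not_gt]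
        · obtain ⟨h1, h2⟩ := (ht i).2 h
          have : ⌊t - b i⌋ = -1 := Int.floor_eq_iff.mpr ⟨by push_cast; linarith, by push_cast; linarith⟩
          rw [this]
          simp [h]

lemma core_card_sorted {n : ℕ} (hn : 0 < n) (b : Fin n → ℝ) (hmono : StrictMono b)
    (hlt : ∀ i, b i < b ⟨0, hn⟩ + 1) :
    Set.ncard (signPatternSet b) = 2 * n := by
  rw [core_sorted hn b hmono hlt, Set.ncard_coe_finset]
  have hinj1 : Function.Injective fun k : Fin n => fun i : Fin n => decide (i ≤ k) := by
    intro k k' h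
    have h1 := congrFun h k
    have h2 := congrFun h k'
    simp only [decide_eq_decide] at h1 h2
    exact le_antisymm (h1.mp le_rfl) (h2.mpr le_rfl)
  have hinj2 : Function.Injective fun k : Fin n => fun i : Fin n => decide (k < i) := by
    intro k k' h
    have h1 := congrFun h k
    have h2 := congrFun h k'
    simp only [decide_eq_decide] at h1 h2
    exact le_antisymm (not_lt.mp fun hc => lt_irrefl k (h1.mpr hc))
      (not_lt.mp fun hc => lt_irrefl k' (h2.mp hc))
  have hdisj : Disjoint (Finset.univ.image fun k : Fin n => fun i : Fin n => decide (i ≤ k))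
      (Finset.univ.image fun k : Fin n => fun i : Fin n => decide (k < i)) := by
    rw [Finset.disjoint_left]
    rintro p hp1 hp2
    simp only [Finset.mem_image, Finset.mem_univ, true_and] at hp1 hp2
    obtain ⟨k, hk⟩ := hp1
    obtain ⟨k', hk'⟩ := hp2
    have h1 := congrFun hk ⟨0, hn⟩
    have h2 := congrFun hk' ⟨0, hn⟩
    rw [← h2] at h1
    simp only [decide_eq_decide] at h1
    exact absurd (h1.mp (by simp [Fin.le_def])) (by simp [Fin.lt_def])
  rw [Finset.card_union_of_disjoint hdisj, Finset.card_image_of_injective _ hinj1,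
    Finset.card_image_of_injective _ hinj2, Finset.card_univ, Fintype.card_fin]
  ring

lemma core_card {n : ℕ} (hn : 0 < n) (b : Fin n → ℝ)
    (hb : ∀ i j, i ≠ j → ∀ k : ℤ, b i - b j ≠ (k : ℝ)) :
    Set.ncard (signPatternSet b) = 2 * n := by
  have hinj : Function.Injective fun i => Int.fract (b i) := by
    intro i j h
    by_contra hij
    rcases Int.fract_eq_fract.mp h with ⟨z, hz⟩
    exact hb i j hij z hz
  set σ := Tuple.sort fun i => Int.fract (b i) with hσ
  have hc : StrictMono ((fun i => Int.fract (b i)) ∘ σ) :=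
    (Tuple.monotone_sort _).strictMono_of_injective (hinj.comp σ.injective)
  have hlt : ∀ i, ((fun i => Int.fract (b i)) ∘ σ) i <
      ((fun i => Int.fract (b i)) ∘ σ) ⟨0, hn⟩ + 1 := by
    intro i
    have h1 := Int.fract_lt_one (b (σ i))
    have h2 := Int.fract_nonneg (b (σ ⟨0, hn⟩))
    simp only [Function.comp_apply]
    linarith
  have h1 := core_card_sorted hn _ hc hlt
  rw [signPatternSet_comp_equiv, Set.ncard_image_of_injective _ ?hcomp, signPatternSet_fract,
    Set.ncard_image_of_injective _ ?hmask] at h1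
  case hcomp =>
    intro p q h
    funext i
    have := congrFun h (σ.symm i)
    simpa using this
  case hmask =>
    intro p q h
    funext i
    have := congrFun h i
    simp only at this
    rcases Bool.dichotomy (decide (Odd ⌊b i⌋)) with hb' | hb' <;>
      rcases Bool.dichotomy (p i) with hp' | hp' <;>
        rcases Bool.dichotomy (q i) with hq' | hq' <;>
          simp_all
  exact h1

lemma cos_eq_zero_iff' {θ : ℝ} : Real.cos θ = 0 ↔ ∃ k : ℤ, θ / Real.pi + 1 / 2 = (k : ℝ) := by
  have hπ : Real.pi ≠ 0 := Real.pi_ne_zero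
  rw [Real.cos_eq_zero_iff]
  constructor
  · rintro ⟨k, rfl⟩
    refine ⟨k + 1, ?_⟩
    push_cast
    field_simp
    ring
  · rintro ⟨k, hk⟩
    refine ⟨k - 1, ?_⟩
    have h2 : θ = ((k : ℝ) - 1 / 2) * Real.pi := by
      have h3 : θ / Real.pi = (k : ℝ) - 1 / 2 := by linarith
      calc θ = θ / Real.pi * Real.pi := by field_simp
      _ = ((k : ℝ) - 1 / 2) * Real.pi := by rw [h3]
    rw [h2]
    push_cast
    ring

lemma cos_pos_iff_even_floor {θ : ℝ} (h : Real.cos θ ≠ 0) :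
    (0 < Real.cos θ ↔ Even ⌊θ / Real.pi + 1 / 2⌋) := by
  have hπ : (0 : ℝ) < Real.pi := Real.pi_pos
  set m : ℤ := ⌊θ / Real.pi + 1 / 2⌋ with hm
  have h1 : (m : ℝ) ≤ θ / Real.pi + 1 / 2 := Int.floor_le _
  have h2 : θ / Real.pi + 1 / 2 < m + 1 := Int.lt_floor_add_one _
  have hθ : θ / Real.pi * Real.pi = θ := div_mul_cancel₀ _ (ne_of_gt hπ)
  set ψ : ℝ := θ - m * Real.pi with hψ
  have hl : -(Real.pi / 2) ≤ ψ := by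
    have h3 : ((m : ℝ) - 1 / 2) * Real.pi ≤ θ / Real.pi * Real.pi :=
      mul_le_mul_of_nonneg_right (by linarith) hπ.le
    rw [hθ] at h3
    nlinarith
  have hr : ψ < Real.pi / 2 := by
    have h3 : θ / Real.pi * Real.pi < ((m : ℝ) + 1 / 2) * Real.pi :=
      mul_lt_mul_of_pos_right (by linarith) hπ
    rw [hθ] at h3
    nlinarith
  have hne : ψ ≠ -(Real.pi / 2) := by
    intro heq
    apply h
    refine cos_eq_zero_iff'.mpr ⟨m, ?_⟩
    have : θ = (m : ℝ) * Real.pi - Real.pi / 2 := by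
      rw [hψ] at heq; linarith
    rw [this]
    field_simp
    ring
  have hcψ : 0 < Real.cos ψ :=
    Real.cos_pos_of_mem_Ioo ⟨lt_of_le_of_ne hl (Ne.symm hne), hr⟩
  have hθψ : θ = ψ + m * Real.pi := by rw [hψ]; ring
  rcases Int.even_or_odd m with ⟨q, hq⟩ | ⟨q, hq⟩
  · have hcc : Real.cos θ = Real.cos ψ := by
      rw [hθψ]
      have harg : ψ + (m : ℝ) * Real.pi = ψ + (q : ℤ) * (2 * Real.pi) := by
        rw [hq]; push_cast; ring
      rw [harg, Real.cos_add_int_mul_two_pi]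
    rw [hcc]
    exact iff_of_true hcψ ⟨q, hq⟩
  · have hcc : Real.cos θ = -Real.cos ψ := by
      rw [hθψ]
      have harg : ψ + (m : ℝ) * Real.pi = (ψ + Real.pi) + (q : ℤ) * (2 * Real.pi) := by
        rw [hq]; push_cast; ring
      rw [harg, Real.cos_add_int_mul_two_pi, Real.cos_add_pi]
    rw [hcc]
    refine iff_of_false (by linarith) ?_
    intro he
    exact (Int.not_odd_iff_even.mpr he) ⟨q, hq⟩

/-- if `x₁,…,xₙ ∈ ℝ²` (`n ≥ 1`) are nonzero and pairwise non-parallel,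
then the number of strict sign patterns `(𝟙(⟨x₁,u⟩ > 0),…,𝟙(⟨xₙ,u⟩ > 0))`, over points
`u ∈ ℝ²` avoiding all the hyperplanes `⟨xᵢ,u⟩ = 0`, is exactly `2n`. -/
theorem strict_sign_patterns_card {n : ℕ} (hn : 1 ≤ n)
    (x : Fin n → (Fin 2 → ℝ)) (hx : ∀ i, x i ≠ 0)
    (hpar : ∀ i j, i ≠ j → LinearIndependent ℝ ![x i, x j]) :
    Set.ncard
      {p : Fin n → Bool | ∃ u : Fin 2 → ℝ,
        (∀ i, x i ⬝ᵥ u ≠ 0) ∧ p = fun i => decide (0 < x i ⬝ᵥ u)} = 2 * n := by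
  classical
  have hn' : 0 < n := hn
  have hπ : (0 : ℝ) < Real.pi := Real.pi_pos
  set z : Fin n → ℂ := fun i => (x i 0 : ℂ) + (x i 1 : ℂ) * Complex.I with hzdef
  have hre : ∀ i, (z i).re = x i 0 := by intro i; simp [hzdef]
  have him : ∀ i, (z i).im = x i 1 := by intro i; simp [hzdef]
  have hz0 : ∀ i, z i ≠ 0 := by
    intro i h
    apply hx i
    have h0 : x i 0 = 0 := by rw [← hre i, h]; simp
    have h1 : x i 1 = 0 := by rw [← him i, h]; simp
    funext j
    fin_cases j
    · simpa using h0
    · simpa using h1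
  set r : Fin n → ℝ := fun i => ‖z i‖ with hrdef
  have hr : ∀ i, 0 < r i := fun i => norm_pos_iff.mpr (hz0 i)
  set a : Fin n → ℝ := fun i => Complex.arg (z i) with hadef
  have hcosa : ∀ i, x i 0 = r i * Real.cos (a i) := by
    intro i
    rw [hadef, Complex.cos_arg (hz0 i), hrdef, hre i]
    rw [mul_comm]
    exact (div_mul_cancel₀ _ (hr i).ne').symm
  have hsina : ∀ i, x i 1 = r i * Real.sin (a i) := by
    intro i
    rw [hadef, Complex.sin_arg, hrdef, him i]
    rw [mul_comm]
    exact (div_mul_cancel₀ _ (hr i).ne').symm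
  -- dot product in polar form
  have hdot : ∀ (i : Fin n) (u : Fin 2 → ℝ) (ρ φ : ℝ), u 0 = ρ * Real.cos φ →
      u 1 = ρ * Real.sin φ → x i ⬝ᵥ u = ρ * r i * Real.cos (φ - a i) := by
    intro i u ρ φ h0 h1
    have : x i ⬝ᵥ u = x i 0 * u 0 + x i 1 * u 1 := by
      simp [dotProduct, Fin.sum_univ_two]
    rw [this, h0, h1, hcosa i, hsina i, Real.cos_sub]
    ring
  set B : Fin n → ℝ := fun i => a i / Real.pi - 1 / 2 with hBdef
  -- separation of the B values
  have hBsep : ∀ i j, i ≠ j → ∀ k : ℤ, B i - B j ≠ (k : ℝ) := by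
    intro i j hij k hk
    have haij : a i - a j = (k : ℝ) * Real.pi := by
      have h1 : (a i - a j) / Real.pi = (k : ℝ) := by
        rw [hBdef] at hk
        simp only at hk
        rw [sub_div]
        linarith
      calc a i - a j = (a i - a j) / Real.pi * Real.pi := by field_simp
      _ = (k : ℝ) * Real.pi := by rw [h1]
    have hsin0 : Real.sin (a i - a j) = 0 := by
      rw [haij]; exact Real.sin_int_mul_pi k
    have hdet : x i 1 * x j 0 - x i 0 * x j 1 = 0 := by
      rw [hcosa i, hsina i, hcosa j, hsina j]
      have h5 : Real.sin (a i) * Real.cos (a j) - Real.cos (a i) * Real.sin (a j) = 0 := by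
        rw [← Real.sin_sub]; exact hsin0
      linear_combination (r i * r j) * h5
    have hli := LinearIndependent.pair_iff.mp (hpar i j hij)
    have step1 := hli (x j 1) (-(x i 1)) (by
      funext l
      fin_cases l
      · have hc : x j 1 * x i 0 + -(x i 1) * x j 0 = 0 := by linear_combination -hdet
        simpa using hc
      · have hc : x j 1 * x i 1 + -(x i 1) * x j 1 = 0 := by ring
        simpa using hc)
    have hxj1 : x j 1 = 0 := step1.1
    have hxi1 : x i 1 = 0 := by have := step1.2; linarith [neg_eq_zero.mp this]
    have step2 := hli (x j 0) (-(x i 0)) (by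
      funext l
      fin_cases l
      · have hc : x j 0 * x i 0 + -(x i 0) * x j 0 = 0 := by ring
        simpa using hc
      · have hc : x j 0 * x i 1 + -(x i 0) * x j 1 = 0 := by
          rw [hxi1, hxj1]; ring
        simpa using hc)
    have hxj0 : x j 0 = 0 := step2.1
    have hxi0 : x i 0 = 0 := by have := step2.2; linarith [neg_eq_zero.mp this]
    apply hx i
    funext l
    fin_cases l
    · simpa using hxi0
    · simpa using hxi1
  -- the set of sign patterns equals the abstract pattern set of B
  have hset : {p : Fin n → Bool | ∃ u : Fin 2 → ℝ,
      (∀ i, x i ⬝ᵥ u ≠ 0) ∧ p = fun i => decide (0 < x i ⬝ᵥ u)} = signPatternSet B := by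
    ext p
    simp only [Set.mem_setOf_eq, signPatternSet]
    constructor
    · rintro ⟨u, hu, rfl⟩
      set w : ℂ := (u 0 : ℂ) + (u 1 : ℂ) * Complex.I with hwdef
      have hwre : w.re = u 0 := by simp [hwdef]
      have hwim : w.im = u 1 := by simp [hwdef]
      have hw0 : w ≠ 0 := by
        intro h
        apply hu ⟨0, hn'⟩
        have h0 : u 0 = 0 := by rw [← hwre, h]; simp
        have h1 : u 1 = 0 := by rw [← hwim, h]; simp
        have : u = 0 := by funext j; fin_cases j <;> assumption
        rw [this, dotProduct_zero]
      set ρ : ℝ := ‖w‖ with hρdef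
      have hρ : 0 < ρ := norm_pos_iff.mpr hw0
      set φ : ℝ := Complex.arg w with hφdef
      have hu0 : u 0 = ρ * Real.cos φ := by
        rw [hφdef, Complex.cos_arg hw0, hρdef, hwre]
        rw [mul_comm]
        exact (div_mul_cancel₀ _ (ne_of_gt hρ)).symm
      have hu1 : u 1 = ρ * Real.sin φ := by
        rw [hφdef, Complex.sin_arg, hρdef, hwim]
        rw [mul_comm]
        exact (div_mul_cancel₀ _ (ne_of_gt hρ)).symm
      have hd : ∀ i, x i ⬝ᵥ u = ρ * r i * Real.cos (φ - a i) := fun i => hdot i u ρ φ hu0 hu1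
      have htB : ∀ i, (φ - a i) / Real.pi + 1 / 2 = φ / Real.pi - B i := by
        intro i
        rw [hBdef]
        simp only
        rw [sub_div]
        ring
      refine ⟨φ / Real.pi, ?_, ?_⟩
      · intro i k hk
        apply hu i
        rw [hd i]
        have hc0 : Real.cos (φ - a i) = 0 := by
          refine cos_eq_zero_iff'.mpr ⟨k, ?_⟩
          rw [htB i]
          exact hk
        rw [hc0, mul_zero]
      · funext i
        have hcne : Real.cos (φ - a i) ≠ 0 := by
          intro h0
          exact hu i (by rw [hd i, h0, mul_zero])
        rw [decide_eq_decide, hd i]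
        rw [show ρ * r i * Real.cos (φ - a i) = (ρ * r i) * Real.cos (φ - a i) from rfl,
          mul_pos_iff_of_pos_left (mul_pos hρ (hr i)),
          cos_pos_iff_even_floor hcne, htB i]
    · rintro ⟨t, hnd, rfl⟩
      set φ : ℝ := t * Real.pi with hφdef
      set u : Fin 2 → ℝ := ![Real.cos φ, Real.sin φ] with hudef
      have hu0 : u 0 = 1 * Real.cos φ := by simp [hudef]
      have hu1 : u 1 = 1 * Real.sin φ := by simp [hudef]
      have hd : ∀ i, x i ⬝ᵥ u = 1 * r i * Real.cos (φ - a i) := fun i => hdot i u 1 φ hu0 hu1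
      have htB : ∀ i, (φ - a i) / Real.pi + 1 / 2 = t - B i := by
        intro i
        rw [hBdef]
        simp only
        rw [sub_div, hφdef, mul_div_cancel_right₀ _ (ne_of_gt hπ)]
        ring
      have hcne : ∀ i, Real.cos (φ - a i) ≠ 0 := by
        intro i h0
        rcases cos_eq_zero_iff'.mp h0 with ⟨k, hk⟩
        rw [htB i] at hk
        exact hnd i k hk
      refine ⟨u, fun i => ?_, ?_⟩
      · rw [hd i]
        exact mul_ne_zero (mul_ne_zero one_ne_zero (ne_of_gt (hr i))) (hcne i)
      · funext i
        rw [decide_eq_decide, hd i]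
        rw [show (1 : ℝ) * r i * Real.cos (φ - a i) = (1 * r i) * Real.cos (φ - a i) from rfl,
          mul_pos_iff_of_pos_left (by linarith [hr i] : (0:ℝ) < 1 * r i),
          cos_pos_iff_even_floor (hcne i), htB i]
  rw [hset]
  exact core_card hn' B hBsep
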